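/- Any mechanism M such that, for every declaration profile d, M(d) is an optimal partition having the minimum number of coalitions among all optimal partitions for d (ties among such partitions broken arbitrarily), is non-obviously manipulable (NOM). -/

import Mathlib

open Finset

/-- FA utility of agent `i` with friend set `t` for a coalition `C` containing her:
`u_i(C) = |C ∩ F_i| − |C ∩ E_i| / n`, where `E_i = N \ (F_i ∪ {i})`. -/
def faUtil (n : ℕ) (t : Finset (Fin n)) (i : Fin n) (C : Finset (Fin n)) : ℚ :=
  ((C ∩ t).card : ℚ) - ((C \ (t ∪ {i})).card : ℚ) / (n : ℚ)

/-- Social welfare of a partition, where agent `j` declares the friend set `F j`. -/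
def faSW (n : ℕ) (F : Fin n → Finset (Fin n))
    (π : Finpartition (univ : Finset (Fin n))) : ℚ :=
  ∑ C ∈ π.parts, ∑ i ∈ C, faUtil n (F i) i C

/-- Utility of agent `i` (with true friend set `t`) for the coalition of `i` in `π`:
since `i` lies in exactly one part, this sum equals `u_i(π(i))`. -/
def faAgentUtil (n : ℕ) (t : Finset (Fin n)) (i : Fin n)
    (π : Finpartition (univ : Finset (Fin n))) : ℚ :=
  ∑ C ∈ π.parts.filter (fun C => i ∈ C), faUtil n t i C

/-!
Best case: if the other agents declare that `{i} ∪ t` and the singletons outside it are cliques,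
and `i` is truthful, every agent obtains its largest possible utility in that partition. Hence
every optimal partition leaves each agent as well off, so `i` obtains `|t|` — more than under any
other outcome.

Worst case: let `C` be the coalition of `i` in `M d'`, where `d'_i = t`. If `C` were merged with
another coalition `P`, the partition would have one coalition fewer. So, as `M d'` is an optimal
partition with the fewest coalitions, the merge must strictly lower welfare. This gives
`(n + 1)|P ∩ t| < 2|C||P|`, and summing over `P` gives `2|t \ C| + 1 < n`. Now let
`S = C ∪ tᶜ` be a clique, make every other agent a singleton, and let `i` declare `d_i`. As `S`
holds more than half of the agents, any coalition of `i` other than `S` costs the clique members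
more welfare than `i` can gain. So `M` puts `i` in `S`, whose true value for `i` is at most
`u_i(C)`: it has the same friends and only more enemies.
-/

namespace Finpartition

variable {α : Type*} [DecidableEq α] {s A B : Finset α}

theorem sum_sum_parts_eq_sum_part {M : Type*} [AddCommMonoid M] (P : Finpartition s)
    (f : Finset α → α → M) :
    ∑ C ∈ P.parts, ∑ j ∈ C, f C j = ∑ j ∈ s, f (P.part j) j := by
  calc ∑ C ∈ P.parts, ∑ j ∈ C, f C j = ∑ C ∈ P.parts, ∑ j ∈ id C, f (P.part j) j :=
        sum_congr rfl fun C hC => sum_congr rfl fun j hj => by rw [P.part_eq_of_mem hC hj]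
    _ = ∑ j ∈ s, f (P.part j) j := by
        rw [← sum_biUnion P.supIndep.pairwiseDisjoint, P.biUnion_parts]

def mergeParts (P : Finpartition s) (hA : A ∈ P.parts) (hB : B ∈ P.parts) : Finpartition s where
  parts := insert (A ∪ B) ((P.parts.erase A).erase B)
  supIndep := by
    rw [supIndep_iff_pairwiseDisjoint, coe_insert]
    refine (P.supIndep.pairwiseDisjoint.subset ?_).insert fun C hC _ => ?_
    · exact fun C hC => mem_of_mem_erase (mem_of_mem_erase hC)
    · obtain ⟨hCB, hCA, hC⟩ : C ≠ B ∧ C ≠ A ∧ C ∈ P.parts := by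
        rwa [mem_coe, mem_erase, mem_erase] at hC
      exact disjoint_union_left.2
        ⟨P.disjoint hA hC (Ne.symm hCA), P.disjoint hB hC (Ne.symm hCB)⟩
  sup_parts := by
    refine le_antisymm (Finset.sup_le fun C hC => ?_) ?_
    · obtain rfl | hC := mem_insert.1 hC
      · exact union_subset (P.le hA) (P.le hB)
      · exact P.le (mem_of_mem_erase (mem_of_mem_erase hC))
    · conv_lhs => rw [← P.sup_parts]
      refine Finset.sup_le fun C hC => ?_
      by_cases hCA : C = A
      · exact hCA ▸ subset_union_left.trans (le_sup (f := id) (mem_insert_self _ _))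
      by_cases hCB : C = B
      · exact hCB ▸ subset_union_right.trans (le_sup (f := id) (mem_insert_self _ _))
      exact le_sup (f := id) (mem_insert_of_mem (mem_erase.2 ⟨hCB, mem_erase.2 ⟨hCA, hC⟩⟩))
  bot_notMem := by
    simp only [bot_eq_empty, mem_insert, not_or]
    exact ⟨fun h => (P.nonempty_of_mem_parts hA).ne_empty (union_eq_empty.1 h.symm).1,
      fun h => P.bot_notMem (mem_of_mem_erase (mem_of_mem_erase h))⟩

variable {P : Finpartition s} {hA : A ∈ P.parts} {hB : B ∈ P.parts}

theorem card_mergeParts_add_one (hAB : A ≠ B) :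
    #(P.mergeParts hA hB).parts + 1 = #P.parts := by
  have hnot : A ∪ B ∉ (P.parts.erase A).erase B := fun h => by
    obtain ⟨-, hne, hmem⟩ := by rwa [mem_erase, mem_erase] at h
    obtain ⟨x, hx⟩ := P.nonempty_of_mem_parts hA
    exact disjoint_left.1 (P.disjoint hA hmem (Ne.symm hne)) hx (mem_union_left _ hx)
  have h2 : 2 ≤ #P.parts := by
    simpa [card_pair hAB] using card_le_card (insert_subset hA (singleton_subset_iff.2 hB))
  simp only [mergeParts, card_insert_of_notMem hnot,
    card_erase_of_mem (mem_erase.2 ⟨Ne.symm hAB, hB⟩), card_erase_of_mem hA]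
  omega

theorem part_mergeParts_of_mem {j : α} (hj : j ∈ A ∪ B) :
    (P.mergeParts hA hB).part j = A ∪ B :=
  part_eq_of_mem _ (mem_insert_self _ _) hj

theorem part_mergeParts_of_notMem {j : α} (hjs : j ∈ s) (hj : j ∉ A ∪ B) :
    (P.mergeParts hA hB).part j = P.part j := by
  refine part_eq_of_mem _
    (mem_insert_of_mem (mem_erase.2 ⟨?_, mem_erase.2 ⟨?_, P.part_mem.2 hjs⟩⟩))
    (P.mem_part hjs)
  · rintro h; exact hj (mem_union_right _ (h ▸ P.mem_part hjs))
  · rintro h; exact hj (mem_union_left _ (h ▸ P.mem_part hjs))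

def withPart [Fintype α] (S : Finset α) (hS : S.Nonempty) : Finpartition (univ : Finset α) :=
  (⊥ : Finpartition Sᶜ).extend hS.ne_empty disjoint_compl_left (by simp)

theorem part_withPart [Fintype α] {S : Finset α} (hS : S.Nonempty) {j : α} (hj : j ∈ S) :
    (withPart S hS).part j = S :=
  part_eq_of_mem _ (mem_insert_self _ _) hj

end Finpartition

section FriendsAppreciation

variable {n : ℕ} {F C D S B : Finset (Fin n)} {j : Fin n}

theorem faUtil_union (h : Disjoint C D) :
    faUtil n F j (C ∪ D) = faUtil n F j C + faUtil n F j D := by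
  simp only [faUtil, union_inter_distrib_right, union_sdiff_distrib,
    card_union_of_disjoint (h.mono inter_subset_left inter_subset_left),
    card_union_of_disjoint (h.mono sdiff_subset sdiff_subset)]
  push_cast
  ring

theorem faUtil_le_card_inter : faUtil n F j C ≤ #(C ∩ F) := by
  unfold faUtil
  have : (0 : ℚ) ≤ #(C \ (F ∪ {j})) / n := by positivity
  linarith

theorem card_inter_sub_card_sdiff_div_le_faUtil :
    #(C ∩ F) - (#(C \ F) : ℚ) / n ≤ faUtil n F j C := by
  unfold faUtil
  gcongr
  exact subset_union_left

theorem neg_card_div_le_faUtil : -((#C : ℚ) / n) ≤ faUtil n F j C := by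
  have h : (#(C \ F) : ℚ) / n ≤ #C / n := by gcongr; exact sdiff_subset
  linarith [card_inter_sub_card_sdiff_div_le_faUtil (F := F) (C := C) (j := j),
    (by positivity : (0 : ℚ) ≤ #(C ∩ F))]

theorem faUtil_le_faUtil_add_card_sdiff :
    faUtil n F j C ≤ faUtil n F j S + #(C \ S) + (#(S \ C) : ℚ) / n := by
  have hC := faUtil_union (F := F) (j := j) (disjoint_sdiff_inter C S)
  have hS := faUtil_union (F := F) (j := j) (disjoint_sdiff_inter S C)
  rw [sdiff_union_inter C S] at hC
  rw [sdiff_union_inter S C, inter_comm] at hS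
  have h1 : faUtil n F j (C \ S) ≤ #(C \ S) :=
    faUtil_le_card_inter.trans (by exact_mod_cast card_le_card inter_subset_left)
  linarith [neg_card_div_le_faUtil (n := n) (F := F) (j := j) (C := S \ C)]

theorem faUtil_union_compl_le : faUtil n F j (C ∪ Fᶜ) ≤ faUtil n F j C := by
  rw [← union_sdiff_self_eq_union, faUtil_union disjoint_sdiff]
  have h : (Fᶜ \ C) ∩ F = ∅ := by
    ext x
    simp +contextual
  have := faUtil_le_card_inter (n := n) (F := F) (j := j) (C := Fᶜ \ C)
  rw [h, card_empty, Nat.cast_zero] at this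
  linarith

theorem faUtil_erase_sub_faUtil (hjB : j ∈ B) (hjD : j ∈ D) :
    faUtil n (B.erase j) j B - faUtil n (B.erase j) j D = #(B \ D) + (#(D \ B) : ℚ) / n := by
  have hB : B.erase j ∪ {j} = B := by rw [union_singleton, insert_erase hjB]
  have h1 := card_sdiff_add_card_inter B D
  have h2 : 1 ≤ #(D ∩ B) := card_pos.2 ⟨j, mem_inter.2 ⟨hjD, hjB⟩⟩
  have h3 : 1 ≤ #B := card_pos.2 ⟨j, hjB⟩
  simp only [faUtil, hB, inter_erase, inter_eq_right.2 (erase_subset j B), sdiff_self,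
    bot_eq_empty, card_empty, card_erase_of_mem hjB, card_erase_of_mem (mem_inter.2 ⟨hjD, hjB⟩),
    inter_comm B D] at h1 ⊢
  push_cast [h2, h3]
  rw [← h1]
  push_cast
  ring

theorem faSW_eq_sum (d : Fin n → Finset (Fin n)) (σ : Finpartition (univ : Finset (Fin n))) :
    faSW n d σ = ∑ j, faUtil n (d j) j (σ.part j) :=
  σ.sum_sum_parts_eq_sum_part fun C j => faUtil n (d j) j C

theorem faAgentUtil_eq (t : Finset (Fin n)) (i : Fin n)
    (σ : Finpartition (univ : Finset (Fin n))) :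
    faAgentUtil n t i σ = faUtil n t i (σ.part i) := by
  have h : σ.parts.filter (fun C => i ∈ C) = {σ.part i} :=
    eq_singleton_iff_unique_mem.2
      ⟨mem_filter.2 ⟨σ.part_mem.2 (mem_univ i), σ.mem_part (mem_univ i)⟩,
        fun C hC => (σ.part_eq_of_mem (mem_filter.1 hC).1 (mem_filter.1 hC).2).symm⟩
  rw [faAgentUtil, h, sum_singleton]

theorem faSW_mergeParts (d : Fin n → Finset (Fin n)) (σ : Finpartition (univ : Finset (Fin n)))
    (hA : C ∈ σ.parts) (hB : D ∈ σ.parts) (hCD : Disjoint C D) :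
    faSW n d (σ.mergeParts hA hB)
      = faSW n d σ + ∑ j ∈ C, faUtil n (d j) j D + ∑ j ∈ D, faUtil n (d j) j C := by
  rw [faSW_eq_sum, faSW_eq_sum, ← sum_add_sum_compl (C ∪ D), ← sum_add_sum_compl (C ∪ D),
    sum_union hCD, sum_union hCD]
  have hout : ∀ j ∈ (C ∪ D)ᶜ, faUtil n (d j) j ((σ.mergeParts hA hB).part j)
      = faUtil n (d j) j (σ.part j) := fun j hj => by
    rw [Finpartition.part_mergeParts_of_notMem (mem_univ j) (mem_compl.1 hj)]
  have hinC : ∀ j ∈ C, faUtil n (d j) j ((σ.mergeParts hA hB).part j)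
      = faUtil n (d j) j (σ.part j) + faUtil n (d j) j D := fun j hj => by
    rw [Finpartition.part_mergeParts_of_mem (mem_union_left _ hj), σ.part_eq_of_mem hA hj,
      faUtil_union hCD]
  have hinD : ∀ j ∈ D, faUtil n (d j) j ((σ.mergeParts hA hB).part j)
      = faUtil n (d j) j (σ.part j) + faUtil n (d j) j C := fun j hj => by
    rw [Finpartition.part_mergeParts_of_mem (mem_union_right _ hj), σ.part_eq_of_mem hB hj,
      union_comm, faUtil_union hCD.symm]
  rw [sum_congr rfl hout, sum_congr rfl hinC, sum_congr rfl hinD, sum_add_distrib,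
    sum_add_distrib]
  ring

def IsOptimal (n : ℕ) (d : Fin n → Finset (Fin n)) (σ : Finpartition (univ : Finset (Fin n))) :
    Prop :=
  ∀ σ', faSW n d σ' ≤ faSW n d σ

section MinimalOptimal

variable {d : Fin n → Finset (Fin n)} {σ : Finpartition (univ : Finset (Fin n))}
  (hopt : IsOptimal n d σ) (hmin : ∀ σ', IsOptimal n d σ' → #σ.parts ≤ #σ'.parts)
include hopt hmin

theorem sum_faUtil_add_sum_faUtil_neg_of_isOptimal (hC : C ∈ σ.parts) (hD : D ∈ σ.parts)
    (hCD : C ≠ D) :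
    ∑ j ∈ C, faUtil n (d j) j D + ∑ j ∈ D, faUtil n (d j) j C < 0 := by
  by_contra! hge
  have := hmin _ fun σ' => (hopt σ').trans <| by
    rw [faSW_mergeParts d σ hC hD (σ.disjoint hC hD hCD)]
    linarith
  have := Finpartition.card_mergeParts_add_one (hA := hC) (hB := hD) hCD
  omega

theorem mul_card_inter_lt_of_isOptimal {i : Fin n} {t P : Finset (Fin n)} (hdi : d i = t)
    (hP : P ∈ σ.parts) (hPi : P ≠ σ.part i) :
    (n + 1) * #(P ∩ t) < 2 * #(σ.part i) * #P := by
  set A := σ.part i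
  have hA : A ∈ σ.parts := σ.part_mem.2 (mem_univ i)
  have hiA : i ∈ A := σ.mem_part (mem_univ i)
  have hgain := sum_faUtil_add_sum_faUtil_neg_of_isOptimal hopt hmin hA hP (Ne.symm hPi)
  have hi : #(P ∩ t) - (#(P \ t) : ℚ) / n ≤ faUtil n (d i) i P :=
    hdi ▸ card_inter_sub_card_sdiff_div_le_faUtil
  have hArest : #(A.erase i) • -((#P : ℚ) / n) ≤ ∑ j ∈ A.erase i, faUtil n (d j) j P :=
    card_nsmul_le_sum _ _ _ fun j _ => neg_card_div_le_faUtil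
  have hPsum : #P • -((#A : ℚ) / n) ≤ ∑ j ∈ P, faUtil n (d j) j A :=
    card_nsmul_le_sum _ _ _ fun j _ => neg_card_div_le_faUtil
  rw [← add_sum_erase _ _ hiA] at hgain
  rw [card_erase_of_mem hiA, nsmul_eq_mul, Nat.cast_sub (card_pos.2 ⟨i, hiA⟩), Nat.cast_one]
    at hArest
  rw [nsmul_eq_mul] at hPsum
  have hPt : (#(P \ t) : ℚ) = #P - #(P ∩ t) := by
    rw [eq_sub_iff_add_eq]
    exact_mod_cast card_sdiff_add_card_inter P t
  rw [hPt] at hi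
  have hn : (0 : ℚ) < n := by exact_mod_cast Fin.pos i
  have hlt :
      (#(P ∩ t) - (#P - #(P ∩ t)) / n + (#A - 1) * -(#P / n) + #P * -(#A / n) : ℚ) < 0 := by
    linarith
  have hdiv : (#(P ∩ t) - (#P - #(P ∩ t)) / n + (#A - 1) * -(#P / n) + #P * -(#A / n) : ℚ)
      = ((n + 1) * #(P ∩ t) - 2 * #A * #P) / n := by
    field_simp
    ring
  rw [hdiv, div_lt_iff₀ hn, zero_mul, sub_neg] at hlt
  exact_mod_cast hlt

theorem two_mul_card_sdiff_add_one_lt {i : Fin n} {t : Finset (Fin n)} (hdi : d i = t)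
    (hne : (t \ σ.part i).Nonempty) :
    2 * #(t \ σ.part i) + 1 < n := by
  set A := σ.part i
  have hA : A ∈ σ.parts := σ.part_mem.2 (mem_univ i)
  have hsum_t : ∑ P ∈ σ.parts, #(P ∩ t) = #t := by
    have h := σ.sum_sum_parts_eq_sum_part fun _ j => if j ∈ t then 1 else 0
    simp only [← card_filter, filter_mem_eq_inter, univ_inter] at h
    exact h
  have hsum : ∑ P ∈ σ.parts, #P = n := by
    rw [σ.sum_card_parts, card_univ, Fintype.card_fin]
  rw [← add_sum_erase _ _ hA] at hsum_t hsum
  have hothers : (σ.parts.erase A).Nonempty := by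
    obtain ⟨x, hx⟩ := hne
    refine ⟨σ.part x, mem_erase.2 ⟨fun h => ?_, σ.part_mem.2 (mem_univ x)⟩⟩
    exact (mem_sdiff.1 hx).2 (h ▸ σ.mem_part (mem_univ x))
  have hlt :
      ∑ P ∈ σ.parts.erase A, (n + 1) * #(P ∩ t) < ∑ P ∈ σ.parts.erase A, 2 * #A * #P :=
    sum_lt_sum_of_nonempty hothers fun P hP =>
      mul_card_inter_lt_of_isOptimal hopt hmin hdi (mem_of_mem_erase hP) (ne_of_mem_erase hP)
  have htA := card_sdiff_add_card_inter t A
  rw [inter_comm] at htA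
  rw [← mul_sum, ← mul_sum, show ∑ P ∈ σ.parts.erase A, #(P ∩ t) = #(t \ A) by omega]
    at hlt
  generalize #(t \ A) = τ, #A = c, ∑ P ∈ σ.parts.erase A, #P = b at *
  subst hsum
  nlinarith [sq_nonneg ((c : ℤ) - b)]

end MinimalOptimal

def cliqueProfile (π : Finpartition (univ : Finset (Fin n))) (j : Fin n) : Finset (Fin n) :=
  (π.part j).erase j

def cliqueLoss (π σ : Finpartition (univ : Finset (Fin n))) (j : Fin n) : ℚ :=
  faUtil n (cliqueProfile π j) j (π.part j) - faUtil n (cliqueProfile π j) j (σ.part j)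

section CliqueProfile

variable (π σ : Finpartition (univ : Finset (Fin n)))

theorem cliqueLoss_eq (j : Fin n) :
    cliqueLoss π σ j = #(π.part j \ σ.part j) + (#(σ.part j \ π.part j) : ℚ) / n :=
  faUtil_erase_sub_faUtil (π.mem_part (mem_univ j)) (σ.mem_part (mem_univ j))

theorem cliqueLoss_nonneg (j : Fin n) : 0 ≤ cliqueLoss π σ j := by
  rw [cliqueLoss_eq]
  positivity

theorem faUtil_cliqueProfile_le (j : Fin n) :
    faUtil n (cliqueProfile π j) j (σ.part j) ≤ faUtil n (cliqueProfile π j) j (π.part j) :=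
  sub_nonneg.1 (cliqueLoss_nonneg π σ j)

theorem faUtil_cliqueProfile_le_of_faSW_le {π σ : Finpartition (univ : Finset (Fin n))}
    (h : faSW n (cliqueProfile π) π ≤ faSW n (cliqueProfile π) σ) (j : Fin n) :
    faUtil n (cliqueProfile π j) j (π.part j)
      ≤ faUtil n (cliqueProfile π j) j (σ.part j) := by
  have hloss := single_le_sum (fun k _ => cliqueLoss_nonneg π σ k) (mem_univ j)
  have hsum :
      ∑ k, cliqueLoss π σ k = faSW n (cliqueProfile π) π - faSW n (cliqueProfile π) σ := by
    simp only [cliqueLoss, sum_sub_distrib, faSW_eq_sum]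
  rw [hsum, cliqueLoss] at hloss
  linarith

theorem sum_erase_cliqueLoss_ge (i : Fin n) :
    (#(π.part i ∩ σ.part i) - 1)
          * (#(π.part i \ σ.part i) + (#(σ.part i \ π.part i) : ℚ) / n)
        + #(σ.part i \ π.part i) * (#(π.part i ∩ σ.part i) / n)
      ≤ ∑ j ∈ (σ.part i).erase i, cliqueLoss π σ j := by
  set S := π.part i
  set C := σ.part i
  have hiS : i ∈ S := π.mem_part (mem_univ i)
  have hiC : i ∈ C := σ.mem_part (mem_univ i)
  have hin : #((C.erase i).filter (· ∈ S)) = #(S ∩ C) - 1 := by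
    rw [filter_mem_eq_inter, erase_inter, inter_comm,
      card_erase_of_mem (mem_inter.2 ⟨hiS, hiC⟩)]
  have hout : (C.erase i).filter (· ∉ S) = C \ S := by
    ext x
    simp only [mem_filter, mem_erase, mem_sdiff]
    exact ⟨fun h => ⟨h.1.2, h.2⟩, fun h => ⟨⟨fun hx => h.2 (hx ▸ hiS), h.1⟩, h.2⟩⟩
  calc _ = ∑ j ∈ C.erase i,
          if j ∈ S then #(S \ C) + (#(C \ S) : ℚ) / n else #(S ∩ C) / n := by
        rw [sum_ite, sum_const, sum_const, nsmul_eq_mul, nsmul_eq_mul, hin, hout,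
          Nat.cast_sub (card_pos.2 ⟨i, mem_inter.2 ⟨hiS, hiC⟩⟩), Nat.cast_one]
    _ ≤ _ := sum_le_sum fun j hj => by
        rw [cliqueLoss_eq, σ.part_eq_of_mem (σ.part_mem.2 (mem_univ i)) (mem_of_mem_erase hj)]
        split_ifs with hjS
        · rw [π.part_eq_of_mem (π.part_mem.2 (mem_univ i)) hjS]
        · have hdisj : Disjoint (π.part j) S := π.disjoint (π.part_mem.2 (mem_univ j))
            (π.part_mem.2 (mem_univ i))
            fun h => hjS ((π.mem_part_iff_part_eq_part (mem_univ j) (mem_univ i)).2 h)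
          have : (#(S ∩ C) : ℚ) / n ≤ #(C \ π.part j) / n := by
            gcongr
            exact fun x hx => mem_sdiff.2
              ⟨(mem_inter.1 hx).2, fun h => disjoint_left.1 hdisj h (mem_inter.1 hx).1⟩
          have : 0 ≤ (#(π.part j \ C) : ℚ) := by positivity
          linarith

theorem card_sdiff_le_sum_compl_cliqueLoss (i : Fin n) :
    (#(π.part i \ σ.part i) : ℚ) ≤ ∑ j ∈ (σ.part i)ᶜ, cliqueLoss π σ j := by
  calc (#(π.part i \ σ.part i) : ℚ)
        = ∑ j ∈ (σ.part i)ᶜ, if j ∈ π.part i then 1 else 0 := by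
        rw [sum_boole, filter_mem_eq_inter, inter_comm, sdiff_eq_inter_compl]
    _ ≤ _ := sum_le_sum fun j hj => by
        split_ifs with hjS
        · have hiσj : i ∉ σ.part j := fun h => mem_compl.1 hj
            ((σ.mem_part_iff_part_eq_part (mem_univ j) (mem_univ i)).2
              (σ.part_eq_of_mem (σ.part_mem.2 (mem_univ j)) h).symm)
          have : (1 : ℚ) ≤ #(π.part j \ σ.part j) := by
            refine Nat.one_le_cast.2 (card_pos.2 ⟨i, mem_sdiff.2 ⟨?_, hiσj⟩⟩)
            rw [π.part_eq_of_mem (π.part_mem.2 (mem_univ i)) hjS]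
            exact π.mem_part (mem_univ i)
          have : (0 : ℚ) ≤ #(σ.part j \ π.part j) / n := by positivity
          rw [cliqueLoss_eq]
          linarith
        · exact cliqueLoss_nonneg π σ j

-- `a + (c - 1) (a + x / n) + x c / n` bounds from below what the clique members lose when `i`
-- moves from `S` to `C`, and `a / n + x` bounds what `i` gains, where `c = |S ∩ C|`,
-- `a = |S \ C|`, `x = |C \ S|` and `τ = |Sᶜ|`.
theorem deviation_gain_lt_clique_loss {n c a x τ : ℕ} (hn : c + a + τ = n) (hc : 1 ≤ c)
    (hx : x ≤ τ) (hax : 0 < a + x) (hτ : 0 < x → 2 * τ + 1 < n) :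
    (a : ℚ) / n + x < a + (c - 1) * (a + x / n) + x * (c / n) := by
  subst hn
  have hN : (0 : ℚ) < c + a + τ := by positivity
  have hc' : (1 : ℚ) ≤ c := by exact_mod_cast hc
  have hnum :
      (0 : ℚ) < a * (c + a + τ - 1) + (c - 1) * a * (c + a + τ) + x * (c - 1 - a - τ) := by
    rcases Nat.eq_zero_or_pos x with rfl | hx0
    · have ha : (1 : ℚ) ≤ a := by exact_mod_cast (show 1 ≤ a by omega)
      have hτ0 : (0 : ℚ) ≤ τ := by positivity
      rw [Nat.cast_zero, zero_mul, add_zero]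
      nlinarith [mul_nonneg (mul_nonneg (sub_nonneg.2 hc') (by linarith : (0 : ℚ) ≤ a)) hN.le]
    · have hx' : (1 : ℚ) ≤ x := by exact_mod_cast hx0
      have hxτ : (x : ℚ) ≤ τ := by exact_mod_cast hx
      have hτ' : (τ : ℚ) + 1 < c + a := by
        exact_mod_cast (by have := hτ hx0; omega : τ + 1 < c + a)
      have ha : (0 : ℚ) ≤ a := by positivity
      nlinarith [mul_nonneg ha (sub_nonneg.2 hc'), mul_nonneg (sub_nonneg.2 hxτ) ha]
  have hgap : a + (c - 1) * (a + x / ↑(c + a + τ)) + x * (c / ↑(c + a + τ))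
        - ((a : ℚ) / ↑(c + a + τ) + x)
      = (a * (c + a + τ - 1) + (c - 1) * a * (c + a + τ) + x * (c - 1 - a - τ))
        / (c + a + τ) := by
    push_cast
    field_simp
    ring
  rw [← sub_pos, hgap]
  positivity

theorem part_eq_of_faSW_le (i : Fin n) (D : Finset (Fin n))
    (hsize : (π.part i)ᶜ.Nonempty → 2 * #(π.part i)ᶜ + 1 < n)
    (hσ : faSW n (Function.update (cliqueProfile π) i D) π
      ≤ faSW n (Function.update (cliqueProfile π) i D) σ) :
    σ.part i = π.part i := by
  set d := Function.update (cliqueProfile π) i D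
  set S := π.part i
  set C := σ.part i
  have hiS : i ∈ S := π.mem_part (mem_univ i)
  have hiC : i ∈ C := σ.mem_part (mem_univ i)
  have hd : ∀ j ∈ C.erase i ∪ Cᶜ,
      faUtil n (d j) j (π.part j) - faUtil n (d j) j (σ.part j) = cliqueLoss π σ j := by
    intro j hj
    have hji : j ≠ i := fun h => by
      rcases mem_union.1 hj with hj | hj
      · exact (mem_erase.1 hj).1 h
      · exact mem_compl.1 hj (h ▸ hiC)
    simp only [d, Function.update_of_ne hji, cliqueLoss]
  have hgap : faSW n d π - faSW n d σ = (faUtil n D i S - faUtil n D i C)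
      + ∑ j ∈ C.erase i, cliqueLoss π σ j + ∑ j ∈ Cᶜ, cliqueLoss π σ j := by
    rw [faSW_eq_sum, faSW_eq_sum, ← sum_sub_distrib, ← sum_add_sum_compl C,
      ← add_sum_erase C _ hiC, sum_congr rfl fun j hj => hd j (mem_union_left _ hj),
      sum_congr rfl fun j hj => hd j (mem_union_right _ hj)]
    simp only [d, Function.update_self]
    rfl
  have h_self := faUtil_le_faUtil_add_card_sdiff (F := D) (j := i) (C := C) (S := S)
  have h_in := sum_erase_cliqueLoss_ge π σ i
  have h_out := card_sdiff_le_sum_compl_cliqueLoss π σ i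
  by_contra hCS
  have hpos : 0 < #(S \ C) + #(C \ S) := by
    by_contra! h0
    exact hCS (Subset.antisymm (sdiff_eq_empty_iff_subset.1 (card_eq_zero.1 (by omega)))
      (sdiff_eq_empty_iff_subset.1 (card_eq_zero.1 (by omega))))
  have hcard : #S + #Sᶜ = n := by rw [card_add_card_compl, Fintype.card_fin]
  have hSC := card_inter_add_card_sdiff S C
  have hlt := deviation_gain_lt_clique_loss (by omega)
    (card_pos.2 ⟨i, mem_inter.2 ⟨hiS, hiC⟩⟩)
    (card_le_card fun x hx => mem_compl.2 (mem_sdiff.1 hx).2) hpos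
    fun hx => hsize ((card_pos.1 hx).mono fun x hx => mem_compl.2 (mem_sdiff.1 hx).2)
  linarith

end CliqueProfile

end FriendsAppreciation

theorem stmt7_general (n : ℕ)
    (M : (Fin n → Finset (Fin n)) → Finpartition (univ : Finset (Fin n)))
    (hM : ∀ d : Fin n → Finset (Fin n), (∀ j, j ∉ d j) →
      (∀ σ : Finpartition (univ : Finset (Fin n)), faSW n d σ ≤ faSW n d (M d)) ∧
      ∀ σ : Finpartition (univ : Finset (Fin n)),
        (∀ σ' : Finpartition (univ : Finset (Fin n)), faSW n d σ' ≤ faSW n d σ) →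
          (M d).parts.card ≤ σ.parts.card) :
    ∀ (i : Fin n) (t di : Finset (Fin n)), i ∉ t → i ∉ di →
      -- Condition 1 (best case):
      (∀ d : Fin n → Finset (Fin n), (∀ j, j ∉ d j) → d i = di →
        ∃ d' : Fin n → Finset (Fin n), (∀ j, j ∉ d' j) ∧ d' i = t ∧
          faAgentUtil n t i (M d) ≤ faAgentUtil n t i (M d')) ∧
      -- Condition 2 (worst case):
      (∀ d' : Fin n → Finset (Fin n), (∀ j, j ∉ d' j) → d' i = t →
        ∃ d : Fin n → Finset (Fin n), (∀ j, j ∉ d j) ∧ d i = di ∧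
          faAgentUtil n t i (M d) ≤ faAgentUtil n t i (M d')) := by
  intro i t di hit hidi
  refine ⟨fun d _ _ => ?_, fun d' hd' hd'i => ?_⟩
  · set π := Finpartition.withPart (insert i t) (insert_nonempty i t)
    have hti : cliqueProfile π i = t := by
      rw [cliqueProfile, Finpartition.part_withPart _ (mem_insert_self i t), erase_insert hit]
    refine ⟨cliqueProfile π, fun j => notMem_erase j _, hti, ?_⟩
    rw [faAgentUtil_eq, faAgentUtil_eq, ← hti]
    exact (faUtil_cliqueProfile_le π (M d) i).trans
      (faUtil_cliqueProfile_le_of_faSW_le ((hM _ fun j => notMem_erase j _).1 π) i)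
  · obtain ⟨hopt, hmin⟩ := hM d' hd'
    have hiS : i ∈ (M d').part i ∪ tᶜ := mem_union_left _ ((M d').mem_part (mem_univ i))
    set π := Finpartition.withPart ((M d').part i ∪ tᶜ) ⟨i, hiS⟩
    have hπi : π.part i = (M d').part i ∪ tᶜ := Finpartition.part_withPart _ hiS
    set d := Function.update (cliqueProfile π) i di
    have hd : ∀ j, j ∉ d j := fun j => by
      rcases eq_or_ne j i with rfl | hj
      · simpa [d] using hidi
      · simp only [d, Function.update_of_ne hj]
        exact notMem_erase j _
    refine ⟨d, hd, Function.update_self .., ?_⟩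
    have hsize : (π.part i)ᶜ.Nonempty → 2 * #(π.part i)ᶜ + 1 < n := by
      rw [hπi, compl_union, compl_compl, inter_comm, ← sdiff_eq_inter_compl]
      exact two_mul_card_sdiff_add_one_lt hopt hmin hd'i
    rw [faAgentUtil_eq, faAgentUtil_eq,
      part_eq_of_faSW_le π (M d) i di hsize ((hM d hd).1 π), hπi]
    exact faUtil_union_compl_le

/-- Any mechanism returning, for every declaration profile, an optimal partition with the
minimum number of coalitions among all optimal partitions is non-obviously manipulable:
for every agent `i`, true type `t` and declaration `di`, both
`max_{π ∈ Π_i(t,M)} u_i(π) ≥ max_{π ∈ Π_i(di,M)} u_i(π)` (here: every outcome reachable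
by declaring `di` is dominated by some outcome reachable by declaring `t`) and
`min_{π ∈ Π_i(t,M)} u_i(π) ≥ min_{π ∈ Π_i(di,M)} u_i(π)` (here: every outcome reachable
by declaring `t` dominates some outcome reachable by declaring `di`) hold. -/
theorem stmt7 (n : ℕ) (hn : 0 < n)
    (M : (Fin n → Finset (Fin n)) → Finpartition (univ : Finset (Fin n)))
    (hM : ∀ d : Fin n → Finset (Fin n), (∀ j, j ∉ d j) →
      (∀ σ : Finpartition (univ : Finset (Fin n)), faSW n d σ ≤ faSW n d (M d)) ∧
      ∀ σ : Finpartition (univ : Finset (Fin n)),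
        (∀ σ' : Finpartition (univ : Finset (Fin n)), faSW n d σ' ≤ faSW n d σ) →
          (M d).parts.card ≤ σ.parts.card) :
    ∀ (i : Fin n) (t di : Finset (Fin n)), i ∉ t → i ∉ di →
      -- Condition 1 (best case):
      (∀ d : Fin n → Finset (Fin n), (∀ j, j ∉ d j) → d i = di →
        ∃ d' : Fin n → Finset (Fin n), (∀ j, j ∉ d' j) ∧ d' i = t ∧
          faAgentUtil n t i (M d) ≤ faAgentUtil n t i (M d')) ∧
      -- Condition 2 (worst case):
      (∀ d' : Fin n → Finset (Fin n), (∀ j, j ∉ d' j) → d' i = t →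
        ∃ d : Fin n → Finset (Fin n), (∀ j, j ∉ d j) ∧ d i = di ∧
          faAgentUtil n t i (M d) ≤ faAgentUtil n t i (M d')) :=
  stmt7_general n M hM
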